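/- Let f be an ℓ_1-contraction on [0,1]^d with constant c ∈ (0,1), ε_i = ε/2^{2i}, and s a slice fixing coordinates {1,…,k−1}. Let t^l_k < t^h_k in [0,1] with t^h_k − t^l_k < ε_k/2, and suppose the unique fixpoint x* of f|_s satisfies t^l_k < x*_k < t^h_k. Let v^l, v^h ∈ [0,1]^d agree with s on fixed coordinates, with v^l_k = t^l_k and v^h_k = t^h_k, and suppose |f(v^h)_i − v^h_i| ≤ ε_i and |f(v^l)_i − v^l_i| ≤ ε_i for all i > k. Then |f(v^h)_k − v^h_k| ≤ ε_k or |f(v^l)_k − v^l_k| ≤ ε_k. -/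
import Mathlib


open Finset

lemma contra_aux {d : ℕ} {f : (Fin d → ℝ) → (Fin d → ℝ)} {c : ℝ}
    (hc0 : 0 ≤ c) (hc1 : c ≤ 1) {u w : Fin d → ℝ}
    (hcontr : ∑ i, |f u i - f w i| ≤ c * ∑ i, |u i - w i|)
    (k : Fin d) {B : ℝ}
    (hk : |u k - w k| + B < |f u k - f w k|)
    (hrest : ∑ i ∈ univ.erase k, (|u i - w i| - |f u i - f w i|) ≤ B) : False := by
  have hS : (0:ℝ) ≤ ∑ i, |u i - w i| := Finset.sum_nonneg fun i _ => abs_nonneg _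
  have h1 : ∑ i, |f u i - f w i| ≤ ∑ i, |u i - w i| :=
    hcontr.trans (mul_le_of_le_one_left hS hc1)
  rw [← Finset.add_sum_erase _ _ (Finset.mem_univ k),
    ← Finset.add_sum_erase _ (fun i => |u i - w i|) (Finset.mem_univ k)] at h1
  rw [Finset.sum_sub_distrib] at hrest
  linarith

lemma geom_aux {d : ℕ} (k : Fin d) {ε : ℝ} (hε : 0 ≤ ε) :
    ∑ i ∈ univ.filter (fun i : Fin d => k < i), ε / 2 ^ (2 * ((i : ℕ) + 1))
      ≤ ε / 2 ^ (2 * ((k : ℕ) + 1)) / 3 := by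
  have h4 : ∀ n : ℕ, ε / 2 ^ (2 * (n + 1)) = ε * (1/4 : ℝ) ^ (n + 1) := by
    intro n
    rw [pow_mul, div_pow]
    norm_num [div_eq_mul_inv]
  calc ∑ i ∈ univ.filter (fun i : Fin d => k < i), ε / 2 ^ (2 * ((i : ℕ) + 1))
      = ∑ i ∈ univ.filter (fun i : Fin d => k < i), ε * (1/4 : ℝ) ^ ((i : ℕ) + 1) := by
        exact Finset.sum_congr rfl fun i _ => h4 _
    _ = ∑ n ∈ (univ.filter (fun i : Fin d => k < i)).image Fin.val,
          ε * (1/4 : ℝ) ^ (n + 1) := by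
        rw [Finset.sum_image (fun x _ y _ h => Fin.val_injective h)]
    _ ≤ ∑ n ∈ Finset.Ico ((k : ℕ) + 1) d, ε * (1/4 : ℝ) ^ (n + 1) := by
        apply Finset.sum_le_sum_of_subset_of_nonneg
        · intro n hn
          simp only [Finset.mem_image, Finset.mem_filter, Finset.mem_univ, true_and] at hn
          obtain ⟨i, hki, rfl⟩ := hn
          exact Finset.mem_Ico.2 ⟨hki, i.isLt⟩
        · intro n _ _
          positivity
    _ = (ε / 4) * ∑ n ∈ Finset.Ico ((k : ℕ) + 1) d, (1/4 : ℝ) ^ n := by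
        rw [Finset.mul_sum]
        exact Finset.sum_congr rfl fun n _ => by rw [pow_succ]; ring
    _ ≤ (ε / 4) * ((1/4 : ℝ) ^ ((k : ℕ) + 1) / (1 - 1/4)) := by
        apply mul_le_mul_of_nonneg_left (geom_sum_Ico_le_of_lt_one (by norm_num) (by norm_num))
        positivity
    _ = ε * (1/4 : ℝ) ^ ((k : ℕ) + 1) / 3 := by ring
    _ = ε / 2 ^ (2 * ((k : ℕ) + 1)) / 3 := by rw [h4]

lemma rest_aux {d : ℕ} (f : (Fin d → ℝ) → (Fin d → ℝ)) (k : Fin d) (u w : Fin d → ℝ)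
    (hagree : ∀ i, i < k → u i = w i)
    {ε : ℝ} (hε : 0 ≤ ε) {m : ℝ} (hm : 0 ≤ m)
    (hbound : ∀ i : Fin d, k < i →
      |u i - w i| - |f u i - f w i| ≤ m * (ε / 2 ^ (2 * ((i : ℕ) + 1)))) :
    ∑ i ∈ univ.erase k, (|u i - w i| - |f u i - f w i|)
      ≤ m * (ε / 2 ^ (2 * ((k : ℕ) + 1)) / 3) := by
  have step1 : ∑ i ∈ univ.erase k, (|u i - w i| - |f u i - f w i|)
      ≤ ∑ i ∈ univ.erase k,
        (if k < i then m * (ε / 2 ^ (2 * ((i : ℕ) + 1))) else 0) := by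
    apply Finset.sum_le_sum
    intro i hi
    by_cases h : k < i
    · simpa [h] using hbound i h
    · have hik : i < k := lt_of_le_of_ne (not_lt.1 h) (Finset.ne_of_mem_erase hi)
      have : u i = w i := hagree i hik
      simp [h, this]
  have step2 : ∑ i ∈ univ.erase k,
        (if k < i then m * (ε / 2 ^ (2 * ((i : ℕ) + 1))) else 0)
      = ∑ i ∈ univ.filter (fun i : Fin d => k < i), m * (ε / 2 ^ (2 * ((i : ℕ) + 1))) := by
    rw [Finset.sum_filter]
    rw [← Finset.add_sum_erase _ _ (Finset.mem_univ k)]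
    simp
  rw [← Finset.mul_sum] at step2
  calc _ ≤ _ := step1
    _ = _ := step2
    _ ≤ m * (ε / 2 ^ (2 * ((k : ℕ) + 1)) / 3) :=
        mul_le_mul_of_nonneg_left (geom_aux k hε) hm

/-- Final binary-search step for ℓ₁ contractions.  Let `f` be an ℓ₁-contraction on
`[0,1]^d` with constant `c ∈ (0,1)`, `ε_i = ε/2^{2i}`, and `s` a slice fixing
coordinates `{1,…,k−1}`.  Let `t^l_k < t^h_k` in `[0,1]` with
`t^h_k − t^l_k < ε_k/2`, and suppose the unique fixpoint `x*` of `f|_s` satisfies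
`t^l_k < x*_k < t^h_k`.  Let `v^l, v^h` agree with `s` on fixed coordinates with
`v^l_k = t^l_k`, `v^h_k = t^h_k`, and `|f(v)_i − v_i| ≤ ε_i` for all `i > k` for
both.  Then `|f(v^h)_k − v^h_k| ≤ ε_k` or `|f(v^l)_k − v^l_k| ≤ ε_k`. -/
theorem approx_final_l1 {d : ℕ} (f : (Fin d → ℝ) → (Fin d → ℝ))
    (c ε : ℝ) (hc : c ∈ Set.Ioo (0 : ℝ) 1) (hε : ε ∈ Set.Ioo (0 : ℝ) 1)
    (hcube : ∀ x : Fin d → ℝ, (∀ i, x i ∈ Set.Icc (0 : ℝ) 1) →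
      ∀ i, f x i ∈ Set.Icc (0 : ℝ) 1)
    (hcontr : ∀ x y : Fin d → ℝ, (∀ i, x i ∈ Set.Icc (0 : ℝ) 1) →
      (∀ i, y i ∈ Set.Icc (0 : ℝ) 1) →
      ∑ i, |f x i - f y i| ≤ c * ∑ i, |x i - y i|)
    (k : Fin d) (s : Fin d → ℝ) (hs : ∀ i, i < k → s i ∈ Set.Icc (0 : ℝ) 1)
    (xstar : Fin d → ℝ)
    (hx1 : ∀ i, xstar i ∈ Set.Icc (0 : ℝ) 1)
    (hx2 : ∀ i, i < k → xstar i = s i)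
    (hx3 : ∀ i, k ≤ i → f xstar i = xstar i)
    (tl th : ℝ) (htl : tl ∈ Set.Icc (0 : ℝ) 1) (hth : th ∈ Set.Icc (0 : ℝ) 1)
    (hlt : tl < th) (hgap : th - tl < (ε / 2 ^ (2 * ((k : ℕ) + 1))) / 2)
    (hxl : tl < xstar k) (hxh : xstar k < th)
    (vl vh : Fin d → ℝ)
    (hvl1 : ∀ i, vl i ∈ Set.Icc (0 : ℝ) 1)
    (hvh1 : ∀ i, vh i ∈ Set.Icc (0 : ℝ) 1)
    (hvl2 : ∀ i, i < k → vl i = s i) (hvlk : vl k = tl)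
    (hvh2 : ∀ i, i < k → vh i = s i) (hvhk : vh k = th)
    (hvl3 : ∀ i : Fin d, k < i → |f vl i - vl i| ≤ ε / 2 ^ (2 * ((i : ℕ) + 1)))
    (hvh3 : ∀ i : Fin d, k < i → |f vh i - vh i| ≤ ε / 2 ^ (2 * ((i : ℕ) + 1))) :
    |f vh k - vh k| ≤ ε / 2 ^ (2 * ((k : ℕ) + 1)) ∨
      |f vl k - vl k| ≤ ε / 2 ^ (2 * ((k : ℕ) + 1)) := by
  by_contra hcon
  push_neg at hcon
  obtain ⟨h1, h2⟩ := hcon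
  have hε0 : (0 : ℝ) < ε := hε.1
  have hεk : (0 : ℝ) < ε / 2 ^ (2 * ((k : ℕ) + 1)) := by positivity
  have hfx : f xstar k = xstar k := hx3 k le_rfl
  have hagreeh : ∀ i, i < k → vh i = xstar i := fun i hi =>
    (hvh2 i hi).trans (hx2 i hi).symm
  have hagreel : ∀ i, i < k → vl i = xstar i := fun i hi =>
    (hvl2 i hi).trans (hx2 i hi).symm
  have hagreelh : ∀ i, i < k → vl i = vh i := fun i hi =>
    (hvl2 i hi).trans (hvh2 i hi).symm
  have hresth : ∑ i ∈ univ.erase k, (|vh i - xstar i| - |f vh i - f xstar i|)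
      ≤ 1 * (ε / 2 ^ (2 * ((k : ℕ) + 1)) / 3) := by
    apply rest_aux f k vh xstar hagreeh hε0.le (by norm_num)
    intro i hi
    have hb := hvh3 i hi
    have hfxi : f xstar i = xstar i := hx3 i hi.le
    rw [hfxi]
    have ht := abs_sub_le (vh i) (f vh i) (xstar i)
    have hcomm := abs_sub_comm (vh i) (f vh i)
    linarith
  have hrestl : ∑ i ∈ univ.erase k, (|vl i - xstar i| - |f vl i - f xstar i|)
      ≤ 1 * (ε / 2 ^ (2 * ((k : ℕ) + 1)) / 3) := by
    apply rest_aux f k vl xstar hagreel hε0.le (by norm_num)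
    intro i hi
    have hb := hvl3 i hi
    have hfxi : f xstar i = xstar i := hx3 i hi.le
    rw [hfxi]
    have ht := abs_sub_le (vl i) (f vl i) (xstar i)
    have hcomm := abs_sub_comm (vl i) (f vl i)
    linarith
  rcases lt_abs.1 h1 with hA | hA
  · -- f vh k > vh k + εk : compare vh with xstar
    refine (contra_aux hc.1.le hc.2.le (hcontr vh xstar hvh1 hx1) k ?_ hresth).elim
    rw [hfx]
    have habs : |vh k - xstar k| = vh k - xstar k :=
      abs_of_pos (by rw [hvhk]; linarith)
    have hle := le_abs_self (f vh k - xstar k)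
    linarith
  rcases lt_abs.1 h2 with hB | hB
  · -- f vh k < vh k - εk and f vl k > vl k + εk : compare vl with vh
    refine (contra_aux hc.1.le hc.2.le (hcontr vl vh hvl1 hvh1) k (B := 2 * (ε / 2 ^ (2 * ((k : ℕ) + 1)) / 3)) ?_ ?_).elim
    · have habs : |vl k - vh k| = vh k - vl k := by
        rw [abs_sub_comm]
        exact abs_of_pos (by rw [hvhk, hvlk]; linarith)
      have hle := le_abs_self (f vl k - f vh k)
      have h2' : (2 : ℝ) * (ε / 2 ^ (2 * ((k : ℕ) + 1)) / 3)
          < ε / 2 ^ (2 * ((k : ℕ) + 1)) := by linarith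
      linarith [hvlk, hvhk]
    · apply rest_aux f k vl vh hagreelh hε0.le (by norm_num)
      intro i hi
      have hbl := hvl3 i hi
      have hbh := hvh3 i hi
      have ht1 := abs_sub_le (vl i) (f vl i) (vh i)
      have ht2 := abs_sub_le (f vl i) (f vh i) (vh i)
      have hc1 := abs_sub_comm (vl i) (f vl i)
      linarith
  · -- f vl k < vl k - εk : compare vl with xstar
    refine (contra_aux hc.1.le hc.2.le (hcontr vl xstar hvl1 hx1) k ?_ hrestl).elim
    rw [hfx]
    have habs : |vl k - xstar k| = xstar k - vl k := by
      rw [abs_sub_comm]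
      exact abs_of_pos (by rw [hvlk]; linarith)
    have hle := le_abs_self (xstar k - f vl k)
    have hcm := abs_sub_comm (f vl k) (xstar k)
    linarith
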